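/- arXiv:2404.18318 — 5 statements merged into one kernel-verified Lean document; each statement's English description precedes it below -/
import Mathlib

section
/- Let G be a connected graph on vertex set [n] and suppose that every pair of non-adjacent vertices of G has at least two common neighbours. Then the only set of queries Q ⊆ binom([n],2) that reconstructs G (i.e., G is the unique graph on [n] agreeing with G on all distances d(x,y) for {x,y} ∈ Q) is Q = binom([n],2). In other words, if Q ≠ binom([n],2), then there exists a graph G' ≠ G on [n] with d_{G'}(x,y) = d_G(x,y) for all {x,y} ∈ Q. -/
/-!
Under the hypothesis every distance in `G` is `0`, `1` or `2`, and a non-adjacent pair `{x, y}`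
keeps one of its two common neighbours `w` with both edges `xw`, `wy` when a single other pair
`e` is toggled. So toggling an unqueried pair `e` yields a different graph in which every
queried distance is unchanged.
-/

open scoped symmDiff
namespace SimpleGraph

variable {V : Type*} {G H : SimpleGraph V} {e : Sym2 V} {x y : V}

lemma adj_symmDiff_fromEdgeSet_singleton_of_ne (h : s(x, y) ≠ e) :
    (G ∆ fromEdgeSet {e}).Adj x y ↔ G.Adj x y := by
  simp [symmDiff_def, fromEdgeSet_adj, h]

lemma symmDiff_fromEdgeSet_singleton_ne (he : ¬e.IsDiag) : G ∆ fromEdgeSet {e} ≠ G := by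
  rw [Ne, symmDiff_eq_left, ← edgeSet_inj, edgeSet_fromEdgeSet, edgeSet_bot]
  simpa [Set.sdiff_eq_empty] using he

lemma dist_eq_two_of_adj_of_adj {w : V} (hxy : x ≠ y) (hna : ¬G.Adj x y) (hxw : G.Adj x w)
    (hwy : G.Adj w y) : G.dist x y = 2 := by
  rw [dist, edist_eq_two_iff.mpr ⟨hxy, hna, w, hxw, hwy.symm⟩]
  rfl

lemma exists_adj_adj_avoiding (e : Sym2 V) {w₁ w₂ : V} (hw : w₁ ≠ w₂)
    (hx₁ : G.Adj x w₁) (hy₁ : G.Adj w₁ y) (hx₂ : G.Adj x w₂) (hy₂ : G.Adj w₂ y) :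
    ∃ w, G.Adj x w ∧ G.Adj w y ∧ s(x, w) ≠ e ∧ s(w, y) ≠ e := by
  have := hx₁.ne; have := hy₁.ne; have := hx₂.ne; have := hy₂.ne
  by_cases h₁ : s(x, w₁) ≠ e ∧ s(w₁, y) ≠ e
  · exact ⟨w₁, hx₁, hy₁, h₁⟩
  refine ⟨w₂, hx₂, hy₂, ?_, ?_⟩ <;> rintro rfl <;> simp_all

lemma dist_eq_of_adj_iff_of_ne
    (hcn : ∀ u v : V, u ≠ v → ¬ G.Adj u v →
      ∃ w₁ w₂ : V, w₁ ≠ w₂ ∧ G.Adj u w₁ ∧ G.Adj v w₁ ∧ G.Adj u w₂ ∧ G.Adj v w₂)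
    (hHG : ∀ u v : V, s(u, v) ≠ e → (H.Adj u v ↔ G.Adj u v)) (hxy : s(x, y) ≠ e) :
    H.dist x y = G.dist x y := by
  by_cases hdiag : x = y
  · simp [hdiag]
  by_cases hadj : G.Adj x y
  · rw [dist_eq_one_iff_adj.mpr hadj, dist_eq_one_iff_adj.mpr ((hHG x y hxy).mpr hadj)]
  obtain ⟨w₁, w₂, hw, hx₁, hy₁, hx₂, hy₂⟩ := hcn x y hdiag hadj
  obtain ⟨w, hxw, hwy, hxw_ne, hwy_ne⟩ := exists_adj_adj_avoiding e hw hx₁ hy₁.symm hx₂ hy₂.symm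
  rw [dist_eq_two_of_adj_of_adj hdiag hadj hxw hwy,
    dist_eq_two_of_adj_of_adj hdiag (mt (hHG x y hxy).mp hadj) ((hHG x w hxw_ne).mpr hxw)
      ((hHG w y hwy_ne).mpr hwy)]

end SimpleGraph

theorem stmt0_general {n : ℕ} (G : SimpleGraph (Fin n))
    (hcn : ∀ u v : Fin n, u ≠ v → ¬ G.Adj u v →
      ∃ w1 w2 : Fin n, w1 ≠ w2 ∧ G.Adj u w1 ∧ G.Adj v w1 ∧ G.Adj u w2 ∧ G.Adj v w2)
    (Q : Set (Sym2 (Fin n))) (hQsub : ∀ e ∈ Q, ¬ e.IsDiag)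
    (hQne : Q ≠ {e : Sym2 (Fin n) | ¬ e.IsDiag}) :
    ∃ G' : SimpleGraph (Fin n), G' ≠ G ∧
      ∀ x y : Fin n, s(x, y) ∈ Q → G'.dist x y = G.dist x y := by
  obtain ⟨e, he, heQ⟩ := Set.exists_of_ssubset (Set.ssubset_iff_subset_ne.mpr ⟨hQsub, hQne⟩)
  exact ⟨G ∆ SimpleGraph.fromEdgeSet {e}, G.symmDiff_fromEdgeSet_singleton_ne he, fun x y hxy ↦
    SimpleGraph.dist_eq_of_adj_iff_of_ne hcn
      (fun _ _ ↦ SimpleGraph.adj_symmDiff_fromEdgeSet_singleton_of_ne)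
      (ne_of_mem_of_not_mem hxy heQ)⟩

/-- If a connected graph on `Fin n` is such that every pair of distinct non-adjacent
vertices has at least two common neighbours, then any query set `Q` (a set of pairs of
distinct vertices) other than the full set of pairs fails to reconstruct `G`: there is a
graph `G' ≠ G` with the same distances on all queried pairs. -/
theorem stmt0 {n : ℕ} (G : SimpleGraph (Fin n)) (hconn : G.Connected)
    (hcn : ∀ u v : Fin n, u ≠ v → ¬ G.Adj u v →
      ∃ w1 w2 : Fin n, w1 ≠ w2 ∧ G.Adj u w1 ∧ G.Adj v w1 ∧ G.Adj u w2 ∧ G.Adj v w2)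
    (Q : Set (Sym2 (Fin n))) (hQsub : ∀ e ∈ Q, ¬ e.IsDiag)
    (hQne : Q ≠ {e : Sym2 (Fin n) | ¬ e.IsDiag}) :
    ∃ G' : SimpleGraph (Fin n), G' ≠ G ∧
      ∀ x y : Fin n, s(x, y) ∈ Q → G'.dist x y = G.dist x y :=
  stmt0_general G hcn Q hQsub hQne
end

section
/- Let d ≥ 3 and let G be a connected graph on [n] with diameter at most d and maximum degree Δ ≥ 2. Let Q ⊆ binom([n],2) be a set of queried pairs with |Q| = q. If the number of non-adjacent, non-queried pairs satisfies binom(n,2) − |E(G)| − q > q · ((d−1)Δ^{d−2} + (d−2)^2 Δ^{d−3}), then there exists an undetectable pair in G, i.e., a pair {u1,u2} of non-adjacent vertices with {u1,u2} ∉ Q such that there is no sequence u1, w1, ..., w_ℓ, u2 with ℓ ≤ d−2 in which ℓ of the consecutive pairs are edges of G and the one remaining consecutive pair belongs to Q. -/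
/-- A "path with one queried gap" of length `ℓ+1 ≤ L+1` from `u1` to `u2`:
a sequence `u1 w1 ... wℓ u2` (with `1 ≤ ℓ ≤ L`) in which `ℓ` of the consecutive pairs
are edges of `G` and the one remaining consecutive pair belongs to `Q`. -/
def HasQueriedGapPath {V : Type*} (G : SimpleGraph V) (Q : Set (Sym2 V)) (L : ℕ)
    (u1 u2 : V) : Prop :=
  ∃ ℓ : ℕ, 1 ≤ ℓ ∧ ℓ ≤ L ∧ ∃ w : Fin (ℓ + 2) → V, w 0 = u1 ∧ w (Fin.last (ℓ + 1)) = u2 ∧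
    ∃ j : Fin (ℓ + 1), s(w j.castSucc, w j.succ) ∈ Q ∧
      ∀ i : Fin (ℓ + 1), i ≠ j → G.Adj (w i.castSucc) (w i.succ)

/-!
Count ordered pairs of distinct vertices. If `u₁ … a b … u₂` has length `ℓ + 1` and its queried
step `s(a, b)` comes after `j` edges, then `u₁` is reached from `a` by a walk of length `j` and
`u₂` from `b` by one of length `ℓ - j`. So each `(ℓ, j)` contributes at most `2q Δ^ℓ` pairs, and
all `j ≤ ℓ ≤ d - 2` together at most
`2q ∑ (ℓ + 1) Δ^ℓ ≤ 2q ((d - 1) Δ^(d-2) + (d - 2)² Δ^(d-3))`.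
With the `2|E|` adjacent and `2q` queried ordered pairs, this is fewer than the `n (n - 1)`
ordered pairs of distinct vertices.
-/

open Finset

variable {V : Type*} [Fintype V] [DecidableEq V]

theorem card_filter_sym2_mem_le (Q : Finset (Sym2 V)) :
    #{p : V × V | s(p.1, p.2) ∈ Q} ≤ 2 * #Q := by
  refine (card_le_mul_card_image (f := fun p : V × V ↦ s(p.1, p.2)) _ 2 fun z _ ↦ ?_).trans
    (Nat.mul_le_mul_left 2 (card_le_card fun z hz ↦ ?_))
  · induction z using Sym2.ind with
    | _ a b =>
      refine (card_le_card (t := {(a, b), (b, a)}) fun p hp ↦ ?_).trans card_le_two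
      obtain ⟨-, hp⟩ := mem_filter.1 hp
      rcases Sym2.eq_iff.1 hp with ⟨rfl, rfl⟩ | ⟨rfl, rfl⟩ <;> simp
  · obtain ⟨p, hp, rfl⟩ := mem_image.1 hz
    exact (mem_filter.1 hp).2

theorem sum_Icc_succ_mul_pow_le (Δ L : ℕ) :
    ∑ ℓ ∈ Icc 1 L, (ℓ + 1) * Δ ^ ℓ ≤ (L + 1) * Δ ^ L + L ^ 2 * Δ ^ (L - 1) := by
  rcases L with _ | b
  · simp
  rw [sum_Icc_succ_top (by omega), add_comm, Nat.add_sub_cancel]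
  gcongr
  have hpow : ∀ ℓ ∈ Icc 1 b, Δ ^ ℓ ≤ Δ ^ b := fun ℓ hℓ ↦ by
    obtain ⟨h1, h2⟩ := mem_Icc.1 hℓ
    rcases Nat.eq_zero_or_pos Δ with rfl | hΔ
    · simp [zero_pow (by omega : ℓ ≠ 0)]
    · exact Nat.pow_le_pow_right hΔ h2
  calc ∑ ℓ ∈ Icc 1 b, (ℓ + 1) * Δ ^ ℓ ≤ ∑ _ℓ ∈ Icc 1 b, (b + 1) * Δ ^ b :=
        sum_le_sum fun ℓ hℓ ↦ Nat.mul_le_mul (by simp at hℓ; omega) (hpow ℓ hℓ)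
    _ ≤ (b + 1) ^ 2 * Δ ^ b := by
        rw [sum_const, Nat.card_Icc, smul_eq_mul, ← mul_assoc, sq]
        gcongr
        omega

theorem two_mul_choose_two (n : ℕ) : 2 * n.choose 2 = n * n - n := by
  rw [Nat.choose_two_right, Nat.mul_div_cancel' n.even_mul_pred_self.two_dvd, Nat.mul_sub_one]

namespace SimpleGraph

variable (G : SimpleGraph V) [DecidableRel G.Adj]

def reachIn : ℕ → V → Finset V
  | 0, v => {v}
  | k + 1, v => (reachIn k v).biUnion fun u ↦ G.neighborFinset u

theorem card_reachIn_le (k : ℕ) (v : V) : #(G.reachIn k v) ≤ G.maxDegree ^ k := by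
  induction k with
  | zero => simp [reachIn]
  | succ k ih =>
    rw [pow_succ]
    refine (card_biUnion_le_card_mul _ _ _ fun u _ ↦ ?_).trans (Nat.mul_le_mul_right _ ih)
    rw [card_neighborFinset_eq_degree]
    exact G.degree_le_maxDegree u

def queriedGapEndpoints (Q : Finset (Sym2 V)) (ℓ : ℕ) : Finset (V × V) :=
  (range (ℓ + 1)).biUnion fun j ↦
    ({p : V × V | s(p.1, p.2) ∈ Q} : Finset (V × V)).biUnion fun p ↦
      G.reachIn j p.1 ×ˢ G.reachIn (ℓ - j) p.2

theorem card_queriedGapEndpoints_le (Q : Finset (Sym2 V)) (ℓ : ℕ) :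
    #(G.queriedGapEndpoints Q ℓ) ≤ (ℓ + 1) * (2 * #Q * G.maxDegree ^ ℓ) := by
  refine (card_biUnion_le_card_mul _ _ _ fun j hj ↦ ?_).trans (by rw [card_range])
  refine (card_biUnion_le_card_mul _ _ _ fun p _ ↦ ?_).trans
    (Nat.mul_le_mul_right _ (card_filter_sym2_mem_le Q))
  have hj : j ≤ ℓ := Nat.lt_succ_iff.1 (mem_range.1 hj)
  calc #(G.reachIn j p.1 ×ˢ G.reachIn (ℓ - j) p.2)
      ≤ G.maxDegree ^ j * G.maxDegree ^ (ℓ - j) := by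
        rw [card_product]; exact Nat.mul_le_mul (G.card_reachIn_le _ _) (G.card_reachIn_le _ _)
    _ = G.maxDegree ^ ℓ := by rw [← pow_add, Nat.add_sub_cancel' hj]

theorem card_biUnion_queriedGapEndpoints_le (Q : Finset (Sym2 V)) (L : ℕ) :
    #((Icc 1 L).biUnion (G.queriedGapEndpoints Q)) ≤
      2 * #Q * ((L + 1) * G.maxDegree ^ L + L ^ 2 * G.maxDegree ^ (L - 1)) :=
  calc _ ≤ ∑ ℓ ∈ Icc 1 L, (ℓ + 1) * (2 * #Q * G.maxDegree ^ ℓ) :=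
        card_biUnion_le.trans (sum_le_sum fun ℓ _ ↦ G.card_queriedGapEndpoints_le Q ℓ)
    _ = 2 * #Q * ∑ ℓ ∈ Icc 1 L, (ℓ + 1) * G.maxDegree ^ ℓ := by
        rw [mul_sum]; exact sum_congr rfl fun ℓ _ ↦ by ring
    _ ≤ _ := Nat.mul_le_mul_left _ (sum_Icc_succ_mul_pow_le _ _)

variable {G}

theorem mem_reachIn_of_adj (w : ℕ → V) (s k : ℕ)
    (h : ∀ i < k, G.Adj (w (s + i)) (w (s + i + 1))) :
    w (s + k) ∈ G.reachIn k (w s) ∧ w s ∈ G.reachIn k (w (s + k)) := by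
  induction k generalizing s with
  | zero => simp [reachIn]
  | succ k ih =>
    obtain ⟨ihf, -⟩ := ih s fun i hi ↦ h i (by omega)
    obtain ⟨-, ihb⟩ := ih (s + 1) fun i hi ↦ by
      simpa [add_assoc, add_comm 1] using h (i + 1) (by omega)
    refine ⟨mem_biUnion.2 ⟨_, ihf, ?_⟩, mem_biUnion.2 ⟨w (s + 1), ?_, ?_⟩⟩
    · simpa [add_assoc] using h k (by omega)
    · simpa [add_assoc, add_comm 1] using ihb
    · simpa using (h 0 (by omega)).symm

end SimpleGraph

theorem HasQueriedGapPath.exists_mem_queriedGapEndpoints {G : SimpleGraph V} [DecidableRel G.Adj]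
    {Q : Finset (Sym2 V)} {L : ℕ} {u₁ u₂ : V}
    (h : HasQueriedGapPath G Q L u₁ u₂) :
    ∃ ℓ ∈ Icc 1 L, (u₁, u₂) ∈ G.queriedGapEndpoints Q ℓ := by
  obtain ⟨ℓ, hℓ₁, hℓL, w, hw₁, hw₂, j, hjQ, hadj⟩ := h
  obtain ⟨w', hw'⟩ : ∃ w' : ℕ → V, ∀ i (hi : i < ℓ + 2), w' i = w ⟨i, hi⟩ :=
    ⟨fun i ↦ w (Fin.ofNat _ i), fun i hi ↦ congrArg w (Fin.ext (by simp [Nat.mod_eq_of_lt hi]))⟩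
  have hu₁ : w' 0 = u₁ := (hw' 0 (by omega)).trans hw₁
  have hu₂ : w' (ℓ + 1) = u₂ := (hw' (ℓ + 1) (by omega)).trans hw₂
  have hadj' : ∀ i (hi : i < ℓ + 1), i ≠ j → G.Adj (w' i) (w' (i + 1)) := fun i hi hij ↦ by
    rw [hw' i (by omega), hw' (i + 1) (by omega)]
    exact hadj ⟨i, hi⟩ (fun h ↦ hij (by simp [← h]))
  have hback := (SimpleGraph.mem_reachIn_of_adj w' 0 j fun i hi ↦ by
    simpa using hadj' i (by omega) (by omega)).2
  have hfwd := (SimpleGraph.mem_reachIn_of_adj w' (j + 1) (ℓ - j) fun i hi ↦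
    hadj' (j + 1 + i) (by omega) (by omega)).1
  refine ⟨ℓ, mem_Icc.2 ⟨hℓ₁, hℓL⟩, mem_biUnion.2 ⟨j, mem_range.2 j.2, mem_biUnion.2
    ⟨(w' j, w' (j + 1)), ?_, mem_product.2 ⟨?_, ?_⟩⟩⟩⟩
  · rw [mem_filter, hw' j (by omega), hw' (j + 1) (by omega)]
    exact ⟨mem_univ _, hjQ⟩
  · simpa [← hu₁] using hback
  · rwa [show j + 1 + (ℓ - j) = ℓ + 1 by omega, hu₂] at hfwd

theorem stmt1_general {n : ℕ} (d : ℕ) (hd : 3 ≤ d) (G : SimpleGraph (Fin n))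
    [DecidableRel G.Adj] [Fintype G.edgeSet]
    (Q : Finset (Sym2 (Fin n))) (q : ℕ) (hq : Q.card = q)
    (hcount : G.edgeFinset.card + q
        + q * ((d - 1) * G.maxDegree ^ (d - 2) + (d - 2) ^ 2 * G.maxDegree ^ (d - 3))
      < n.choose 2) :
    ∃ u1 u2 : Fin n, u1 ≠ u2 ∧ ¬ G.Adj u1 u2 ∧ s(u1, u2) ∉ Q ∧
      ¬ HasQueriedGapPath G (↑Q) (d - 2) u1 u2 := by
  by_contra! hall
  have hcover : (univ : Finset (Fin n)).offDiag ⊆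
      ({p : Fin n × Fin n | s(p.1, p.2) ∈ G.edgeFinset ∪ Q} : Finset _) ∪
        (Icc 1 (d - 2)).biUnion (G.queriedGapEndpoints Q) := by
    rintro ⟨u₁, u₂⟩ hu
    by_cases hEQ : s(u₁, u₂) ∈ G.edgeFinset ∪ Q
    · exact mem_union_left _ (mem_filter.2 ⟨mem_univ _, hEQ⟩)
    · rw [mem_union, not_or, SimpleGraph.mem_edgeFinset, SimpleGraph.mem_edgeSet] at hEQ
      obtain ⟨ℓ, hℓ, hmem⟩ := HasQueriedGapPath.exists_mem_queriedGapEndpoints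
        (hall u₁ u₂ (mem_offDiag.1 hu).2.2 hEQ.1 hEQ.2)
      exact mem_union_right _ (mem_biUnion.2 ⟨ℓ, hℓ, hmem⟩)
  have hedge := (card_filter_sym2_mem_le (G.edgeFinset ∪ Q)).trans
    (Nat.mul_le_mul_left 2 (card_union_le _ _))
  have hgap := G.card_biUnion_queriedGapEndpoints_le Q (d - 2)
  rw [show d - 2 + 1 = d - 1 by omega, show d - 2 - 1 = d - 3 by omega, hq, mul_assoc] at hgap
  have hcard := (card_le_card hcover).trans (card_union_le _ _)
  rw [offDiag_card, card_univ, Fintype.card_fin, ← two_mul_choose_two] at hcard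
  omega

/-- If `G` is a connected graph on `[n]` of diameter at most `d ≥ 3` and maximum degree
`Δ ≥ 2`, and the set `Q` of queried pairs has size `q` with
`binom(n,2) - |E(G)| - q > q ((d-1)Δ^{d-2} + (d-2)² Δ^{d-3})`, then `G` has an
undetectable pair. -/
theorem stmt1 {n : ℕ} (d : ℕ) (hd : 3 ≤ d) (G : SimpleGraph (Fin n))
    [DecidableRel G.Adj] [Fintype G.edgeSet]
    (hconn : G.Connected) (hdiam : ∀ u v : Fin n, G.dist u v ≤ d)
    (hΔ : 2 ≤ G.maxDegree)
    (Q : Finset (Sym2 (Fin n))) (q : ℕ) (hq : Q.card = q)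
    (hcount : G.edgeFinset.card + q
        + q * ((d - 1) * G.maxDegree ^ (d - 2) + (d - 2) ^ 2 * G.maxDegree ^ (d - 3))
      < n.choose 2) :
    ∃ u1 u2 : Fin n, u1 ≠ u2 ∧ ¬ G.Adj u1 u2 ∧ s(u1, u2) ∉ Q ∧
      ¬ HasQueriedGapPath G (↑Q) (d - 2) u1 u2 :=
  stmt1_general d hd G Q q hq hcount
end

section
/- Let G be a connected graph on [n] with diameter at most d, where d ≥ 3, and let Q ⊆ binom([n],2). Suppose {u1,u2} is an undetectable pair: u1,u2 non-adjacent, {u1,u2} ∉ Q, and there is no sequence u1 w1 ... w_ℓ u2 with ℓ ≤ d−2 in which ℓ consecutive pairs are edges of G and one consecutive pair is in Q. Then the graph G' obtained from G by adding the edge {u1,u2} satisfies d_{G'}(x,y) = d_G(x,y) for every {x,y} ∈ Q; in particular Q does not reconstruct G. -/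
open SimpleGraph

private lemma adj_dist_le {V : Type*} {G : SimpleGraph V} {a c : V} (h : G.Adj a c) :
    G.dist a c ≤ 1 := by
  simpa using SimpleGraph.dist_le h.toWalk

/-- Any walk in `G ⊔ {u1u2}` either gives a `G`-distance bound, or decomposes across
the new edge. -/
private lemma key {V : Type*} {G : SimpleGraph V} (hconn : G.Connected) {u1 u2 : V}
    {x y : V} (p : (G ⊔ SimpleGraph.fromEdgeSet {s(u1, u2)}).Walk x y) :
    G.dist x y ≤ p.length ∨
    G.dist x u1 + G.dist u2 y + 1 ≤ p.length ∨
    G.dist x u2 + G.dist u1 y + 1 ≤ p.length := by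
  induction p with
  | nil => left; simp
  | @cons a c b h p ih =>
    rw [SimpleGraph.Walk.length_cons]
    rcases (SimpleGraph.sup_adj _ _ _ _).mp h with hac | hac
    · have h1 : G.dist a c ≤ 1 := adj_dist_le hac
      rcases ih with h' | h' | h'
      · left
        have := hconn.dist_triangle (u := a) (v := c) (w := b)
        omega
      · right; left
        have := hconn.dist_triangle (u := a) (v := c) (w := u1)
        omega
      · right; right
        have := hconn.dist_triangle (u := a) (v := c) (w := u2)
        omega
    · rw [SimpleGraph.fromEdgeSet_adj] at hac
      have hmem : s(a, c) = s(u1, u2) := hac.1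
      rw [Sym2.eq_iff] at hmem
      rcases hmem with ⟨rfl, rfl⟩ | ⟨rfl, rfl⟩ <;>
      rcases ih with h' | h' | h' <;>
      (try simp only [SimpleGraph.dist_self] at h') <;>
      simp only [SimpleGraph.dist_self] <;>
      first
      | (left; omega)
      | (right; left; omega)
      | (right; right; omega)

/-- Build a queried-gap path from two short walks and a queried pair. -/
private lemma build {V : Type*} {G : SimpleGraph V} (hconn : G.Connected)
    {Q : Set (Sym2 V)} {u1 u2 x y : V} {L : ℕ}
    (hxy : s(x, y) ∈ Q) (hQ : s(u1, u2) ∉ Q)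
    (hle : G.dist u1 x + G.dist y u2 ≤ L) :
    HasQueriedGapPath G Q L u1 u2 := by
  obtain ⟨p1, hp1⟩ := (hconn.preconnected u1 x).exists_walk_length_eq_dist
  obtain ⟨p2, hp2⟩ := (hconn.preconnected y u2).exists_walk_length_eq_dist
  set a := G.dist u1 x with ha
  set b := G.dist y u2 with hb
  have hab : 1 ≤ a + b := by
    by_contra hcon
    push_neg at hcon
    have ha0 : a = 0 := by omega
    have hb0 : b = 0 := by omega
    have hx : u1 = x := (hconn.dist_eq_zero_iff).mp ha0
    have hy : y = u2 := (hconn.dist_eq_zero_iff).mp hb0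
    exact hQ (by rwa [hx, ← hy])
  refine ⟨a + b, hab, hle, fun i => if (i : ℕ) ≤ a then p1.getVert i
    else p2.getVert ((i : ℕ) - (a + 1)), ?_, ?_, ⟨a, by omega⟩, ?_, ?_⟩
  · simp [p1.getVert_zero]
  · simp only [Fin.val_last]
    have hnle : ¬ (a + b + 1 ≤ a) := by omega
    simp only [hnle, if_false]
    have : a + b + 1 - (a + 1) = b := by omega
    rw [this, ← hp2, p2.getVert_length]
  · simp only [Fin.coe_castSucc, Fin.val_succ, le_refl, if_true]
    have hnle : ¬ (a + 1 ≤ a) := by omega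
    simp only [hnle, if_false]
    have : a + 1 - (a + 1) = 0 := by omega
    rw [this, p2.getVert_zero, ← hp1, p1.getVert_length]
    exact hxy
  · intro i hij
    have hine : (i : ℕ) ≠ a := by
      intro hc
      exact hij (Fin.ext hc)
    simp only [Fin.coe_castSucc, Fin.val_succ]
    have hilt : (i : ℕ) < a + b + 1 := i.isLt
    rcases lt_or_gt_of_ne hine with hlt | hgt
    · have hle1 : (i : ℕ) ≤ a := le_of_lt hlt
      have hle2 : (i : ℕ) + 1 ≤ a := hlt
      simp only [hle1, hle2, if_true]
      exact p1.adj_getVert_succ (by omega)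
    · have hn1 : ¬ ((i : ℕ) ≤ a) := by omega
      have hn2 : ¬ ((i : ℕ) + 1 ≤ a) := by omega
      simp only [hn1, hn2, if_false]
      have heq : (i : ℕ) + 1 - (a + 1) = ((i : ℕ) - (a + 1)) + 1 := by omega
      rw [heq]
      exact p2.adj_getVert_succ (by omega)

/-- If `G` is connected of diameter at most `d ≥ 3` and `{u1,u2}` is an undetectable
pair (non-adjacent, not queried, and no path with one queried gap of length `ℓ+1` with
`ℓ ≤ d-2` joins them), then adding the edge `{u1,u2}` does not change any queried
distance; in particular `Q` does not reconstruct `G`. -/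
theorem stmt2 {n : ℕ} (d : ℕ) (hd : 3 ≤ d) (G : SimpleGraph (Fin n))
    (hconn : G.Connected) (hdiam : ∀ u v : Fin n, G.dist u v ≤ d)
    (Q : Set (Sym2 (Fin n))) (u1 u2 : Fin n) (hne : u1 ≠ u2)
    (hadj : ¬ G.Adj u1 u2) (hQ : s(u1, u2) ∉ Q)
    (hund : ¬ HasQueriedGapPath G Q (d - 2) u1 u2) :
    (∀ x y : Fin n, s(x, y) ∈ Q →
      (G ⊔ SimpleGraph.fromEdgeSet {s(u1, u2)}).dist x y = G.dist x y) ∧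
    ¬ (∀ G' : SimpleGraph (Fin n),
        (∀ x y : Fin n, s(x, y) ∈ Q → G'.dist x y = G.dist x y) → G' = G) := by
  set G' := G ⊔ SimpleGraph.fromEdgeSet {s(u1, u2)} with hG'
  have hsub : G ≤ G' := le_sup_left
  have hconn' : G'.Connected := hconn.mono hsub
  have part1 : ∀ x y : Fin n, s(x, y) ∈ Q → G'.dist x y = G.dist x y := by
    intro x y hxy
    refine le_antisymm ?_ ?_
    · obtain ⟨p, hp⟩ := (hconn.preconnected x y).exists_walk_length_eq_dist
      calc G'.dist x y ≤ (p.mapLe hsub).length := SimpleGraph.dist_le _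
        _ = p.length := SimpleGraph.Walk.length_map _ _
        _ = G.dist x y := hp
    · by_contra hlt
      push_neg at hlt
      obtain ⟨p, hp⟩ := (hconn'.preconnected x y).exists_walk_length_eq_dist
      rcases key hconn p with h | h | h
      · omega
      · refine hund (build hconn hxy hQ ?_)
        have h1 := hdiam x y
        rw [SimpleGraph.dist_comm (u := u1) (v := x),
          SimpleGraph.dist_comm (u := y) (v := u2)]
        omega
      · refine hund (build hconn (Sym2.eq_swap ▸ hxy) hQ ?_)
        have h1 := hdiam x y
        omega
  refine ⟨part1, fun hall => ?_⟩
  have hGadj : G'.Adj u1 u2 := by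
    rw [hG', SimpleGraph.sup_adj, SimpleGraph.fromEdgeSet_adj]
    exact Or.inr ⟨rfl, hne⟩
  rw [hall G' part1] at hGadj
  exact hadj hGadj
end

section
/- Let d ≥ 3 and ε > 0. There exists C = C(d,ε) > 0 such that for every graph G on [n] with diameter at most d and maximum degree Δ > C, the distance query complexity q of G satisfies q·(d−1+ε)·Δ^{d−2} ≥ binom(n,2) − |E(G)|. -/
/-- `Q` reconstructs `G` if `G` is the unique graph on `[n]` with the given distances on
all queried pairs. -/
def Reconstructs {n : ℕ} (G : SimpleGraph (Fin n)) (Q : Finset (Sym2 (Fin n))) : Prop :=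
  ∀ G' : SimpleGraph (Fin n),
    (∀ x y : Fin n, s(x, y) ∈ Q → G'.dist x y = G.dist x y) → G' = G

/-- The distance query complexity of `G`: the minimum size of a query set that
reconstructs `G`. -/
noncomputable def queryComplexity {n : ℕ} (G : SimpleGraph (Fin n)) : ℕ :=
  sInf {q : ℕ | ∃ Q : Finset (Sym2 (Fin n)), Q.card = q ∧ Reconstructs G Q}

/-!
Adding a non-edge `uv` to `G` yields a different graph, so some queried distance `d(x, y)`
must change. A shortest `x`–`y` walk of `G + uv` then runs through the new edge, whence
`d(x, p) + d(y, q) ≤ d - 2` for `{p, q} = {u, v}`. For a fixed query the number of such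
ordered pairs `(p, q)` is at most `∑_{i + j ≤ d - 2} Δ^i Δ^j = ∑_{k ≤ d - 2} (k + 1) Δ^k`,
since the sphere of radius `i` has at most `Δ^i` vertices; for `Δ ≥ d² / ε` this sum is at
most `(d - 1 + ε) Δ^{d - 2}`.
-/

open Finset

namespace SimpleGraph

variable {V : Type*} {G : SimpleGraph V}

theorem Walk.exists_walk_or_through_edge_of_sup_edge {u v a b : V}
    (W : (G ⊔ edge u v).Walk a b) :
    (∃ P : G.Walk a b, P.length ≤ W.length) ∨
      ∃ p q, s(p, q) = s(u, v) ∧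
        ∃ (P : G.Walk a p) (R : G.Walk q b), P.length + 1 + R.length ≤ W.length := by
  induction W with
  | nil => exact .inl ⟨.nil, le_rfl⟩
  | @cons a c b hac W ih =>
    rw [length_cons]
    by_cases hG : G.Adj a c
    · rcases ih with ⟨P, hP⟩ | ⟨p, q, hpq, P, R, hPR⟩
      · exact .inl ⟨.cons hG P, by simpa using hP⟩
      · exact .inr ⟨p, q, hpq, .cons hG P, R, by simp only [length_cons]; omega⟩
    have hedge : s(a, c) = s(u, v) := by
      rcases hac with h | h
      · exact absurd h hG
      · rcases ((edge_adj u v a c).mp h).1 with ⟨rfl, rfl⟩ | ⟨rfl, rfl⟩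
        exacts [rfl, Sym2.eq_swap]
    rcases ih with ⟨P, hP⟩ | ⟨p, q, hpq, P, R, hPR⟩
    · exact .inr ⟨a, c, hedge, .nil, P, by simp only [length_nil]; omega⟩
    -- the walk uses the new edge twice; dropping the loop between its two uses shortens it
    rcases Sym2.eq_iff.mp (hpq.trans hedge.symm) with ⟨rfl, rfl⟩ | ⟨rfl, rfl⟩
    · exact .inr ⟨p, q, hedge, .nil, R, by simp only [length_nil]; omega⟩
    · exact .inl ⟨R, by omega⟩

theorem Connected.exists_dist_add_lt_of_dist_sup_edge_ne (hc : G.Connected) {u v x y : V}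
    (h : (G ⊔ edge u v).dist x y ≠ G.dist x y) :
    ∃ p q, s(p, q) = s(u, v) ∧ G.dist x p + 1 + G.dist q y < G.dist x y := by
  have hlt : (G ⊔ edge u v).dist x y < G.dist x y :=
    ((hc x y).dist_anti le_sup_left).lt_of_ne h
  obtain ⟨W, hW⟩ := (hc.mono (le_sup_left : G ≤ G ⊔ edge u v)).exists_walk_length_eq_dist x y
  rcases W.exists_walk_or_through_edge_of_sup_edge with ⟨P, hP⟩ | ⟨p, q, hpq, P, R, hPR⟩
  · exact absurd (dist_le P) (by omega)
  · exact ⟨p, q, hpq, by have := dist_le P; have := dist_le R; omega⟩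

theorem Connected.exists_adj_dist_eq_of_dist_eq_succ (hc : G.Connected) {x w : V} {i : ℕ}
    (h : G.dist x w = i + 1) : ∃ c, G.Adj c w ∧ G.dist x c = i := by
  obtain ⟨P, hP⟩ := hc.exists_walk_length_eq_dist w x
  cases P with
  | nil => simp at h
  | @cons _ c _ hwc R =>
    have hR : R.length = i := by rw [dist_comm] at h; simp only [Walk.length_cons] at hP; omega
    have hxc : G.dist x c ≤ i := by rw [dist_comm, ← hR]; exact dist_le R
    have hxw := hc.dist_triangle (u := x) (v := c) (w := w)
    rw [dist_comm (u := c), (dist_eq_one_iff_adj).mpr hwc] at hxw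
    exact ⟨c, hwc.symm, by omega⟩

variable [Fintype V] [DecidableEq V]

variable (G) in
/-- The non-edges `s(p, q)` whose addition can shorten `d(x, y)` below `m + 2`, for the query
`s(x, y)`. -/
noncomputable def nearPairs (m : ℕ) : Sym2 V → Finset (Sym2 V) :=
  Sym2.lift ⟨fun x y => ({pq : V × V | G.dist x pq.1 + G.dist y pq.2 ≤ m} : Finset _).image
    fun pq => s(pq.1, pq.2), fun x y => by
      ext e
      simp only [mem_image, mem_filter, mem_univ, true_and, Prod.exists]
      constructor <;> rintro ⟨p, q, hpq, rfl⟩ <;> exact ⟨q, p, by omega, Sym2.eq_swap⟩⟩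

theorem mk_mem_nearPairs {m : ℕ} {x y p q : V} (h : G.dist x p + G.dist y q ≤ m) :
    s(p, q) ∈ G.nearPairs m s(x, y) := by
  simp only [nearPairs, Sym2.lift_mk, mem_image, mem_filter, mem_univ, true_and]
  exact ⟨(p, q), h, rfl⟩

variable [DecidableRel G.Adj]

theorem Connected.card_filter_dist_eq_le_maxDegree_pow (hc : G.Connected) (x : V) (i : ℕ) :
    #{w | G.dist x w = i} ≤ G.maxDegree ^ i := by
  induction i with
  | zero =>
    have : ({w | G.dist x w = 0} : Finset V) ⊆ {x} := fun w hw => by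
      simpa [hc.dist_eq_zero_iff, eq_comm] using hw
    simpa using card_le_card this
  | succ i ih =>
    have hsub : ({w | G.dist x w = i + 1} : Finset V) ⊆
        ({w | G.dist x w = i} : Finset V).biUnion fun c => G.neighborFinset c := fun w hw => by
      obtain ⟨c, hcw, hc⟩ := hc.exists_adj_dist_eq_of_dist_eq_succ (mem_filter.mp hw).2
      exact mem_biUnion.mpr ⟨c, by simpa using hc, by simpa using hcw⟩
    calc _ ≤ #{w | G.dist x w = i} * G.maxDegree :=
          (card_le_card hsub).trans <| card_biUnion_le_card_mul _ _ _ fun w _ => by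
            simpa using G.degree_le_maxDegree w
      _ ≤ G.maxDegree ^ (i + 1) := by rw [pow_succ]; gcongr

theorem Connected.card_filter_dist_add_dist_le (hc : G.Connected) (x y : V) (m : ℕ) :
    #{pq : V × V | G.dist x pq.1 + G.dist y pq.2 ≤ m} ≤
      ∑ k ∈ range (m + 1), (k + 1) * G.maxDegree ^ k := by
  have hsub : ({pq : V × V | G.dist x pq.1 + G.dist y pq.2 ≤ m} : Finset (V × V)) ⊆
      (range (m + 1)).biUnion fun k => (antidiagonal k).biUnion fun ij =>
        ({p | G.dist x p = ij.1} : Finset V) ×ˢ ({q | G.dist y q = ij.2} : Finset V) :=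
    fun pq hpq => by
      simp only [mem_filter, mem_univ, true_and] at hpq
      simp only [mem_biUnion, mem_range, HasAntidiagonal.mem_antidiagonal, mem_product,
        mem_filter, mem_univ, true_and]
      exact ⟨_, by omega, (G.dist x pq.1, G.dist y pq.2), rfl, rfl, rfl⟩
  refine (card_le_card hsub).trans <| card_biUnion_le.trans <| sum_le_sum fun k _ => ?_
  rw [← Nat.card_antidiagonal k]
  refine card_biUnion_le_card_mul _ _ _ fun ij hij => ?_
  rw [card_product, ← HasAntidiagonal.mem_antidiagonal.mp hij, pow_add]
  exact Nat.mul_le_mul (hc.card_filter_dist_eq_le_maxDegree_pow x _)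
    (hc.card_filter_dist_eq_le_maxDegree_pow y _)

theorem Connected.card_nearPairs_le (hc : G.Connected) (m : ℕ) (z : Sym2 V) :
    #(G.nearPairs m z) ≤ ∑ k ∈ range (m + 1), (k + 1) * G.maxDegree ^ k := by
  induction z using Sym2.ind with
  | _ x y => exact card_image_le.trans (hc.card_filter_dist_add_dist_le x y m)

theorem card_edgeFinset_compl_add_card_edgeFinset [Fintype G.edgeSet] :
    #Gᶜ.edgeFinset + #G.edgeFinset = (Fintype.card V).choose 2 := by
  have hcompl : Gᶜ.edgeFinset = (⊤ : SimpleGraph V).edgeFinset \ G.edgeFinset := by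
    ext e
    induction e using Sym2.ind with
    | _ u v => simp [compl_adj]
  rw [hcompl, card_sdiff_add_card_eq_card (edgeFinset_mono le_top),
    card_edgeFinset_top_eq_card_choose_two]

end SimpleGraph

open SimpleGraph

theorem Reconstructs.exists_dist_ne {n : ℕ} {G G' : SimpleGraph (Fin n)}
    {Q : Finset (Sym2 (Fin n))} (hQ : Reconstructs G Q) (h : G' ≠ G) :
    ∃ x y, s(x, y) ∈ Q ∧ G'.dist x y ≠ G.dist x y := by
  by_contra! h'
  exact h (hQ G' h')

theorem reconstructs_univ {n : ℕ} (G : SimpleGraph (Fin n)) : Reconstructs G univ := by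
  intro G' h
  ext x y
  rw [← dist_eq_one_iff_adj, ← dist_eq_one_iff_adj, h x y (mem_univ _)]

theorem exists_reconstructs_card_eq_queryComplexity {n : ℕ} (G : SimpleGraph (Fin n)) :
    ∃ Q : Finset (Sym2 (Fin n)), #Q = queryComplexity G ∧ Reconstructs G Q :=
  Nat.sInf_mem (s := {q | ∃ Q : Finset (Sym2 (Fin n)), #Q = q ∧ Reconstructs G Q})
    ⟨_, univ, rfl, reconstructs_univ G⟩

theorem Reconstructs.card_edgeFinset_compl_le {n m : ℕ} {G : SimpleGraph (Fin n)}
    [DecidableRel G.Adj] (hc : G.Connected) (hdiam : ∀ u v, G.dist u v ≤ m + 2)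
    {Q : Finset (Sym2 (Fin n))} (hQ : Reconstructs G Q) :
    #Gᶜ.edgeFinset ≤ #Q * ∑ k ∈ range (m + 1), (k + 1) * G.maxDegree ^ k := by
  have hcover : Gᶜ.edgeFinset ⊆ Q.biUnion (G.nearPairs m) := by
    intro e he
    induction e using Sym2.ind with
    | _ u v =>
      obtain ⟨huv, hnadj⟩ := (compl_adj G u v).mp (mem_edgeFinset.mp he)
      obtain ⟨x, y, hxy, hdist⟩ := hQ.exists_dist_ne (G.lt_sup_edge u v huv hnadj).ne'
      obtain ⟨p, q, hpq, hlt⟩ := hc.exists_dist_add_lt_of_dist_sup_edge_ne hdist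
      refine mem_biUnion.mpr ⟨_, hxy, hpq ▸ mk_mem_nearPairs ?_⟩
      have := hdiam x y
      rw [dist_comm (u := y)]
      omega
  exact (card_le_card hcover).trans <| card_biUnion_le_card_mul _ _ _ fun z _ =>
    hc.card_nearPairs_le m z

theorem sum_range_succ_mul_pow_le {m : ℕ} {ε D : ℝ} (hD : 1 ≤ D) (hm : (m : ℝ) ^ 2 ≤ ε * D) :
    ∑ k ∈ range (m + 1), ((k : ℝ) + 1) * D ^ k ≤ (m + 1 + ε) * D ^ m := by
  have hD0 : 0 < D := by linarith
  have hscaled : D * ∑ k ∈ range m, ((k : ℝ) + 1) * D ^ k ≤ ε * D * D ^ m :=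
    calc D * ∑ k ∈ range m, ((k : ℝ) + 1) * D ^ k
        = ∑ k ∈ range m, ((k : ℝ) + 1) * D ^ (k + 1) := by
          rw [mul_sum]; exact sum_congr rfl fun k _ => by ring
      _ ≤ ∑ _k ∈ range m, (m : ℝ) * D ^ m := sum_le_sum fun k hk => by
          have hkm : (k : ℝ) + 1 ≤ m := by exact_mod_cast mem_range.mp hk
          exact mul_le_mul hkm (pow_le_pow_right₀ hD (mem_range.mp hk))
            (by positivity) (by positivity)
      _ = (m : ℝ) ^ 2 * D ^ m := by rw [sum_const, card_range, nsmul_eq_mul]; ring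
      _ ≤ ε * D * D ^ m := by gcongr
  have hrest : ∑ k ∈ range m, ((k : ℝ) + 1) * D ^ k ≤ ε * D ^ m :=
    le_of_mul_le_mul_left (by linarith) hD0
  rw [sum_range_succ]
  linarith

/-- For every `d ≥ 3` and `ε > 0` there is `C > 0` such that every connected graph on
`[n]` of diameter at most `d` and maximum degree `Δ > C` has query complexity `q`
satisfying `q (d-1+ε) Δ^{d-2} ≥ binom(n,2) - |E(G)|`. -/
theorem stmt3 (d : ℕ) (hd : 3 ≤ d) (ε : ℝ) (hε : 0 < ε) :
    ∃ C : ℝ, 0 < C ∧ ∀ (n : ℕ) (G : SimpleGraph (Fin n)) [DecidableRel G.Adj]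
      [Fintype G.edgeSet], G.Connected → (∀ u v : Fin n, G.dist u v ≤ d) →
      C < (G.maxDegree : ℝ) →
      (n.choose 2 : ℝ) - G.edgeFinset.card ≤
        (queryComplexity G : ℝ) * ((d : ℝ) - 1 + ε) * (G.maxDegree : ℝ) ^ (d - 2) := by
  obtain ⟨m, rfl⟩ : ∃ m, d = m + 2 := ⟨d - 2, by omega⟩
  refine ⟨((m + 2 : ℕ) : ℝ) ^ 2 / ε, by positivity, fun n G _ _ hc hdiam hC => ?_⟩
  have hΔ : (1 : ℝ) ≤ G.maxDegree := by
    exact_mod_cast Nat.cast_pos.mp ((by positivity : (0 : ℝ) < _).trans hC)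
  have hm : (m : ℝ) ^ 2 ≤ ε * G.maxDegree := by
    rw [div_lt_iff₀ hε] at hC; push_cast at hC; nlinarith [(Nat.cast_nonneg m : (0 : ℝ) ≤ m)]
  obtain ⟨Q, hQcard, hQ⟩ := exists_reconstructs_card_eq_queryComplexity G
  have hcount : (#Gᶜ.edgeFinset : ℝ) ≤
      #Q * ∑ k ∈ range (m + 1), ((k : ℝ) + 1) * (G.maxDegree : ℝ) ^ k := by
    exact_mod_cast hQ.card_edgeFinset_compl_le hc hdiam
  have hsum : ∑ k ∈ range (m + 1), ((k : ℝ) + 1) * (G.maxDegree : ℝ) ^ k ≤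
      (((m + 2 : ℕ) : ℝ) - 1 + ε) * (G.maxDegree : ℝ) ^ m := by
    convert sum_range_succ_mul_pow_le hΔ hm using 2; push_cast; ring
  have hedges : (#Gᶜ.edgeFinset : ℝ) + #G.edgeFinset = n.choose 2 := by
    exact_mod_cast (Fintype.card_fin n ▸ card_edgeFinset_compl_add_card_edgeFinset (G := G))
  rw [Nat.add_sub_cancel, mul_assoc, ← hQcard]
  calc (n.choose 2 : ℝ) - #G.edgeFinset = #Gᶜ.edgeFinset := by linarith
    _ ≤ _ := hcount
    _ ≤ _ := by gcongr
end

section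
/- Let G be a connected graph on [n], X ⊆ [n], and Q = (X × ([n]\X)) ∪ binom(X,2) the set of all pairs meeting X. Suppose that for every pair of vertices v1, v2 ∈ [n]\X there exists x ∈ X such that d_{G∖{v1,v2}}(v1,x) ≤ k and d_{G∖{v1,v2}}(v2,x) ≥ k+2, where G∖{v1,v2} denotes G with the edge {v1,v2} removed if present. Then Q reconstructs G: every graph G' on [n] with d_{G'}(x,y) = d_G(x,y) for all {x,y} ∈ Q equals G. -/
open SimpleGraph in
private lemma edist_le_coe_aux {V : Type*} {H : SimpleGraph V} {u v : V} {m : ℕ}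
    (h : H.edist u v ≤ (m : ℕ∞)) :
    H.dist u v ≤ m ∧ ((H.dist u v : ℕ∞)) = H.edist u v := by
  have hne : H.edist u v ≠ ⊤ := ne_top_of_le_ne_top (by simp) h
  have hcast : ((H.dist u v : ℕ∞)) = H.edist u v := ENat.coe_toNat hne
  refine ⟨?_, hcast⟩
  rw [← hcast] at h
  exact_mod_cast h

/-- Non-adaptive reconstruction from queries meeting a fixed set `X`.  Let `G` be a
connected graph on `[n]` and `X ⊆ [n]`, and let the query set consist of all pairs with
at least one endpoint in `X`.  Suppose that for all distinct `v1, v2 ∉ X` there is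
`x ∈ X` with `dist_{G∖{v1,v2}}(v1, x) ≤ k` and `dist_{G∖{v1,v2}}(v2, x) ≥ k + 2` (in the
graph with the edge `{v1,v2}` deleted; distance measured in `ℕ∞`, so unreachable counts
as `≥ k+2`).  Then any graph `G'` on `[n]` with the same distances on all queried pairs
equals `G`. -/
theorem stmt7 {n : ℕ} (k : ℕ) (G : SimpleGraph (Fin n)) (hconn : G.Connected)
    (X : Finset (Fin n))
    (hwitness : ∀ v1 v2 : Fin n, v1 ∉ X → v2 ∉ X → v1 ≠ v2 →
      ∃ x ∈ X, (G.deleteEdges {s(v1, v2)}).edist v1 x ≤ (k : ℕ∞) ∧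
        ((k : ℕ∞) + 2) ≤ (G.deleteEdges {s(v1, v2)}).edist v2 x) :
    ∀ G' : SimpleGraph (Fin n),
      (∀ a b : Fin n, (a ∈ X ∨ b ∈ X) → G'.dist a b = G.dist a b) → G' = G := by
  intro G' hdist
  have hGcast : ∀ a b : Fin n, ((G.dist a b : ℕ∞)) = G.edist a b := by
    intro a b
    exact ENat.coe_toNat ((SimpleGraph.edist_ne_top_iff_reachable).2
      (hconn.preconnected a b))
  -- reachability in G' for pairs meeting X (distinct)
  have hreach' : ∀ v x : Fin n, v ≠ x → (v ∈ X ∨ x ∈ X) → G'.Reachable v x := by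
    intro v x hne hX
    have hpos : 0 < G.dist v x := (hconn.preconnected v x).pos_dist_of_ne hne
    have : G'.dist v x ≠ 0 := by rw [hdist v x hX]; omega
    exact SimpleGraph.Reachable.of_dist_ne_zero this
  have hcast' : ∀ v x : Fin n, v ≠ x → (v ∈ X ∨ x ∈ X) →
      ((G'.dist v x : ℕ∞)) = G'.edist v x := by
    intro v x hne hX
    exact ENat.coe_toNat ((SimpleGraph.edist_ne_top_iff_reachable).2 (hreach' v x hne hX))
  -- adjacency agrees on pairs meeting X
  have hadjX : ∀ a b : Fin n, (a ∈ X ∨ b ∈ X) → (G'.Adj a b ↔ G.Adj a b) := by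
    intro a b h
    rw [← SimpleGraph.dist_eq_one_iff_adj, ← SimpleGraph.dist_eq_one_iff_adj,
      hdist a b h]
  -- Step A: non-edges of G outside X are non-edges of G'
  have hA : ∀ v1 v2 : Fin n, v1 ∉ X → v2 ∉ X → v1 ≠ v2 → ¬ G.Adj v1 v2 →
      ¬ G'.Adj v1 v2 := by
    intro v1 v2 h1X h2X hne hGadj hG'adj
    obtain ⟨x, hx, h1, h2⟩ := hwitness v1 v2 h1X h2X hne
    have hdel : G.deleteEdges {s(v1, v2)} = G := by
      rw [SimpleGraph.deleteEdges_eq_self, Set.disjoint_singleton_right]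
      simpa using hGadj
    rw [hdel] at h1 h2
    have hne1 : v1 ≠ x := by rintro rfl; exact h1X hx
    have hne2 : v2 ≠ x := by rintro rfl; exact h2X hx
    -- G.dist v1 x ≤ k
    obtain ⟨hd1, -⟩ := edist_le_coe_aux h1
    -- k + 2 ≤ G.dist v2 x
    have h2' : ((k + 2 : ℕ) : ℕ∞) ≤ ((G.dist v2 x : ℕ∞)) := by
      rw [hGcast]; exact_mod_cast h2
    have hd2 : k + 2 ≤ G.dist v2 x := by exact_mod_cast h2'
    -- but v2 ~ v1 in G' gives G'.dist v2 x ≤ k + 1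
    have ht : G'.edist v2 x ≤ G'.edist v2 v1 + G'.edist v1 x :=
      SimpleGraph.edist_triangle
    have he1 : G'.edist v2 v1 = 1 := SimpleGraph.edist_eq_one_iff_adj.2 hG'adj.symm
    have he2 : G'.edist v1 x ≤ (k : ℕ∞) := by
      rw [← hcast' v1 x hne1 (Or.inr hx), hdist v1 x (Or.inr hx)]
      exact_mod_cast hd1
    have hle : G'.edist v2 x ≤ ((k + 1 : ℕ) : ℕ∞) := by
      calc G'.edist v2 x ≤ G'.edist v2 v1 + G'.edist v1 x := ht
        _ ≤ 1 + (k : ℕ∞) := by gcongr; simp [he1, he2]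
        _ = ((k + 1 : ℕ) : ℕ∞) := by push_cast; ring
    obtain ⟨hd3, -⟩ := edist_le_coe_aux hle
    rw [hdist v2 x (Or.inr hx)] at hd3
    omega
  -- G' ≤ G
  have hle : G' ≤ G := by
    intro a b hab
    by_cases hX : a ∈ X ∨ b ∈ X
    · exact (hadjX a b hX).1 hab
    · push_neg at hX
      by_contra h
      exact hA a b hX.1 hX.2 hab.ne h hab
  -- G ≤ G'
  have hge : G ≤ G' := by
    intro a b hab
    by_cases hX : a ∈ X ∨ b ∈ X
    · exact (hadjX a b hX).2 hab
    · push_neg at hX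
      by_contra hnadj
      obtain ⟨x, hx, h1, h2⟩ := hwitness a b hX.1 hX.2 hab.ne
      set H := G.deleteEdges {s(a, b)} with hH
      have hnex : a ≠ x := by rintro rfl; exact hX.1 hx
      have hnbx : b ≠ x := by rintro rfl; exact hX.2 hx
      -- G' ≤ H
      have hG'H : G' ≤ H := by
        intro u v huv
        rw [hH, SimpleGraph.deleteEdges_adj]
        refine ⟨hle huv, ?_⟩
        simp only [Set.mem_singleton_iff, Sym2.eq_iff]
        rintro (⟨rfl, rfl⟩ | ⟨rfl, rfl⟩)
        · exact hnadj huv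
        · exact hnadj huv.symm
      -- G.dist b x ≤ k + 1
      have hGax : G.edist a x ≤ (k : ℕ∞) :=
        le_trans (SimpleGraph.edist_anti (SimpleGraph.deleteEdges_le _)) h1
      have hGbx : G.edist b x ≤ ((k + 1 : ℕ) : ℕ∞) := by
        calc G.edist b x ≤ G.edist b a + G.edist a x := SimpleGraph.edist_triangle
          _ ≤ 1 + (k : ℕ∞) :=
              add_le_add (le_of_eq (SimpleGraph.edist_eq_one_iff_adj.2 hab.symm)) hGax
          _ = ((k + 1 : ℕ) : ℕ∞) := by push_cast; ring
      obtain ⟨hdGbx, -⟩ := edist_le_coe_aux hGbx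
      -- hence G'.edist b x ≤ k+1
      have hG'bx : G'.edist b x ≤ ((k + 1 : ℕ) : ℕ∞) := by
        rw [← hcast' b x hnbx (Or.inr hx), hdist b x (Or.inr hx)]
        exact_mod_cast hdGbx
      -- hence H.edist b x ≤ k+1, contradicting h2
      have hHbx : H.edist b x ≤ ((k + 1 : ℕ) : ℕ∞) :=
        le_trans (SimpleGraph.edist_anti hG'H) hG'bx
      obtain ⟨hd3, hc3⟩ := edist_le_coe_aux hHbx
      have h2' : ((k + 2 : ℕ) : ℕ∞) ≤ ((H.dist b x : ℕ∞)) := by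
        rw [hc3]; exact_mod_cast h2
      have : k + 2 ≤ H.dist b x := by exact_mod_cast h2'
      omega
  exact le_antisymm hle hge
end
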